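/- arXiv:2406.14823 — 5 statements merged into one kernel-verified Lean document; each statement's English description precedes it below -/
import Mathlib

section
/- There is no continuous function ũ : [−√10, √10] → ℝ such that for every x in this interval, ((ũ(x)−1)² − (x−1))·((ũ(x)+1)² + (x−2)) ≤ 0 holds. Consequently, for the system ẋ = x·((u−1)²−(x−1))·((u+1)²+(x−2)), ẏ = y·((u−1)²−(x−1))·((u+1)²+(x−2)) with safe set {x²+y² ≤ 10}, no continuous feedback satisfying the CBF condition pointwise exists, even though the CBF condition is pointwise feasible with strict inequality. -/
open Real Set

/-- Strict pointwise feasibility holds: for every `x` there is a control `u`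
with `((u−1)² − (x−1))((u+1)² + (x−2)) < 0`; nevertheless there is no
continuous `ũ : [−√10, √10] → ℝ` satisfying
`((ũ(x)−1)² − (x−1))((ũ(x)+1)² + (x−2)) ≤ 0` for every `x` in the interval,
i.e. no continuous feedback satisfying the CBF condition pointwise exists. -/
theorem stmt4 :
    (∀ x : ℝ, ∃ u : ℝ, ((u - 1)^2 - (x - 1)) * ((u + 1)^2 + (x - 2)) < 0) ∧
    ¬ ∃ u : ℝ → ℝ, ContinuousOn u (Icc (-sqrt 10) (sqrt 10)) ∧
      ∀ x ∈ Icc (-sqrt 10) (sqrt 10),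
        ((u x - 1)^2 - (x - 1)) * ((u x + 1)^2 + (x - 2)) ≤ 0 := by
  constructor
  · intro x
    by_cases h : x < 2
    · exact ⟨-1, by nlinarith⟩
    · exact ⟨1, by nlinarith⟩
  · rintro ⟨u, hu, hcond⟩
    have h2 : (2 : ℝ) < sqrt 10 := by
      have := Real.lt_sqrt (x := 2) (y := 10) (by norm_num)
      rw [this]; norm_num
    have hab : -sqrt 10 ≤ sqrt 10 := by linarith
    have ha : -sqrt 10 ∈ Icc (-sqrt 10) (sqrt 10) := ⟨le_refl _, hab⟩
    have hb : sqrt 10 ∈ Icc (-sqrt 10) (sqrt 10) := ⟨hab, le_refl _⟩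
    -- F x = g x - h x = -4 u x - 2 x + 3
    set F : ℝ → ℝ := fun x => ((u x - 1)^2 - (x - 1)) - ((u x + 1)^2 + (x - 2)) with hF
    have hFcont : ContinuousOn F (Icc (-sqrt 10) (sqrt 10)) := by
      apply ContinuousOn.sub
      · exact ((hu.sub continuousOn_const).pow 2).sub
          (continuousOn_id.sub continuousOn_const)
      · exact ((hu.add continuousOn_const).pow 2).add
          (continuousOn_id.sub continuousOn_const)
    -- F at -sqrt 10 is positive
    have hFa : 0 < F (-sqrt 10) := by
      have hc := hcond _ ha
      have hg : 0 < (u (-sqrt 10) - 1)^2 - ((-sqrt 10) - 1) := by nlinarith [sq_nonneg (u (-sqrt 10) - 1)]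
      have hh : (u (-sqrt 10) + 1)^2 + ((-sqrt 10) - 2) ≤ 0 := by
        by_contra hpos
        push_neg at hpos
        nlinarith
      simp only [hF]
      linarith
    have hFb : F (sqrt 10) < 0 := by
      have hc := hcond _ hb
      have hh : 0 < (u (sqrt 10) + 1)^2 + (sqrt 10 - 2) := by nlinarith [sq_nonneg (u (sqrt 10) + 1)]
      have hg : (u (sqrt 10) - 1)^2 - (sqrt 10 - 1) ≤ 0 := by
        by_contra hpos
        push_neg at hpos
        nlinarith
      simp only [hF]
      linarith
    have hsub := intermediate_value_Icc' hab hFcont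
    have h0 : (0 : ℝ) ∈ Icc (F (sqrt 10)) (F (-sqrt 10)) := ⟨le_of_lt hFb, le_of_lt hFa⟩
    obtain ⟨x0, hx0, hFx0⟩ := hsub h0
    have hc := hcond _ hx0
    -- F x0 = 0 means g = h, so product = g^2 ≤ 0 so g = h = 0; but g + h = 2 u^2 + 1 > 0
    simp only [hF] at hFx0
    nlinarith [sq_nonneg (u x0), sq_nonneg ((u x0 - 1)^2 - (x0 - 1))]
end

section
/- Let h : ℝ → ℝ be h(x) = e^x sin(x) and f(x) = h(x) (scalar autonomous dynamics ẋ = h(x)). Then there exists a sequence (a_k) with a_k ∈ ((2k+1)π − π/4, (2k+1)π) for each positive integer k, and a constant r = e^{−π/4}·√2/2, such that r/2 < h(a_k) < r, cos(a_k) < 0 for all k, and lim_{k→∞} h′(a_k)·f(a_k) = −∞. Consequently there is no extended class K∞ function α with h′(x)f(x) ≥ −α(h(x)) for all x in {h ≥ 0}; i.e., h is not a barrier function for this system. -/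
open Filter Real Set

/-- A function `α : ℝ → ℝ` is of extended class `K∞`. -/
def ExtClassKInf (α : ℝ → ℝ) : Prop :=
  Continuous α ∧ StrictMono α ∧ α 0 = 0 ∧
    Tendsto α atTop atTop ∧ Tendsto α atBot atBot

private lemma exists_ak (k : ℕ) :
    ∃ x ∈ Ioo ((2 * (k : ℝ) + 1) * π - π / 4) ((2 * (k : ℝ) + 1) * π),
      exp x * sin x = 3 / 4 * (exp (-(π / 4)) * sqrt 2 / 2) := by
  set L : ℝ := (2 * (k : ℝ) + 1) * π - π / 4 with hL
  set R : ℝ := (2 * (k : ℝ) + 1) * π with hR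
  have hpi := pi_pos
  have hLR : L ≤ R := by simp [hL, hR]; linarith
  have hcont : ContinuousOn (fun x : ℝ => exp x * sin x) (Icc L R) :=
    (continuous_exp.mul continuous_sin).continuousOn
  have hsinR : sin R = 0 := by
    have : R = π + (k : ℝ) * (2 * π) := by rw [hR]; ring
    rw [this, sin_add_nat_mul_two_pi, sin_pi]
  have hsinL : sin L = sqrt 2 / 2 := by
    have : L = (π - π / 4) + (k : ℝ) * (2 * π) := by rw [hL]; ring
    rw [this, sin_add_nat_mul_two_pi, sin_pi_sub, sin_pi_div_four]
  have hmem : (3 / 4 * (exp (-(π / 4)) * sqrt 2 / 2)) ∈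
      Ioo (exp R * sin R) (exp L * sin L) := by
    constructor
    · rw [hsinR, mul_zero]; positivity
    · rw [hsinL]
      have h2 : (0:ℝ) < sqrt 2 := by positivity
      have he : exp (-(π / 4)) < exp L := by
        apply exp_lt_exp.mpr
        rw [hL]
        have : (0:ℝ) ≤ (k : ℝ) := Nat.cast_nonneg k
        nlinarith
      nlinarith [exp_pos (-(π/4))]
  obtain ⟨x, hx, hfx⟩ := intermediate_value_Ioo' hLR hcont hmem
  exact ⟨x, hx, hfx⟩

private lemma deriv_h (x : ℝ) :
    deriv (fun t : ℝ => exp t * sin t) x = exp x * sin x + exp x * cos x := by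
  have : HasDerivAt (fun t : ℝ => exp t * sin t)
      (exp x * sin x + exp x * cos x) x :=
    (Real.hasDerivAt_exp x).mul (Real.hasDerivAt_sin x)
  exact this.deriv

private lemma cos_ak_lt {k : ℕ} {x : ℝ}
    (hx : x ∈ Ioo ((2 * (k : ℝ) + 1) * π - π / 4) ((2 * (k : ℝ) + 1) * π)) :
    cos x < -(sqrt 2 / 2) := by
  set s : ℝ := (2 * (k : ℝ) + 1) * π - x with hs
  have hs1 : 0 < s := by simp [hs]; linarith [hx.2]
  have hs2 : s < π / 4 := by
    have := hx.1; simp only [hs]; linarith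
  have hcx : cos x = -cos s := by
    have hxe : x = (π - s) + (k : ℝ) * (2 * π) := by rw [hs]; ring
    rw [hxe, cos_add_nat_mul_two_pi, cos_pi_sub]
  rw [hcx]
  have : cos (π / 4) < cos s := by
    apply cos_lt_cos_of_nonneg_of_le_pi hs1.le _ hs2
    linarith [pi_pos]
  rw [cos_pi_div_four] at this
  linarith

/-- For `h(x) = eˣ sin x` and the scalar dynamics `ẋ = h(x)` there is a
sequence `a_k ∈ ((2k+1)π − π/4, (2k+1)π)` with `r/2 < h(a_k) < r`
(`r = e^{−π/4}√2/2`) and `cos a_k < 0`, along which `h′(a_k)·h(a_k) → −∞`.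
Consequently no extended class `K∞` function `α` satisfies
`h′(x)h(x) ≥ −α(h(x))` on `{h ≥ 0}`: `h` is not a barrier function. -/
theorem stmt8 :
    (∃ a : ℕ → ℝ, (∀ k : ℕ, 0 < k →
        a k ∈ Ioo ((2 * k + 1) * π - π / 4) ((2 * k + 1) * π) ∧
        exp (-(π / 4)) * sqrt 2 / 2 / 2 < exp (a k) * sin (a k) ∧
        exp (a k) * sin (a k) < exp (-(π / 4)) * sqrt 2 / 2 ∧
        cos (a k) < 0) ∧
      Tendsto (fun k =>
          deriv (fun x => exp x * sin x) (a k) * (exp (a k) * sin (a k)))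
        atTop atBot) ∧
    ¬ ∃ α : ℝ → ℝ, ExtClassKInf α ∧
      ∀ x : ℝ, 0 ≤ exp x * sin x →
        deriv (fun t => exp t * sin t) x * (exp x * sin x) ≥
          -α (exp x * sin x) := by
  set r : ℝ := exp (-(π / 4)) * sqrt 2 / 2 with hr
  have hrpos : 0 < r := by rw [hr]; positivity
  set c : ℝ := 3 / 4 * r with hc
  have hcpos : 0 < c := by rw [hc]; linarith
  choose a ha hha using exists_ak
  have hcoslt : ∀ k : ℕ, cos (a k) < -(sqrt 2 / 2) := fun k => cos_ak_lt (ha k)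
  have hs2 : (0:ℝ) < sqrt 2 := by positivity
  -- the product tendsto atBot
  have htend : Tendsto (fun k : ℕ =>
      deriv (fun x => exp x * sin x) (a k) * (exp (a k) * sin (a k)))
      atTop atBot := by
    have hbound : ∀ k : ℕ,
        deriv (fun x => exp x * sin x) (a k) * (exp (a k) * sin (a k)) ≤
          c * c + c * (-(sqrt 2 / 2) * exp ((2 * (k : ℝ) + 1) * π - π / 4)) := by
      intro k
      have hcval : (3 / 4 * (exp (-(π / 4)) * sqrt 2 / 2)) = c := by
        rw [hc, hr]
      rw [deriv_h, hha k, hcval]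
      have h1 : exp ((2 * (k : ℝ) + 1) * π - π / 4) ≤ exp (a k) :=
        exp_le_exp.mpr (ha k).1.le
      have h2 := hcoslt k
      have h3 : exp (a k) * cos (a k) ≤
          -(sqrt 2 / 2) * exp ((2 * (k : ℝ) + 1) * π - π / 4) := by
        nlinarith [exp_pos (a k)]
      nlinarith
    apply tendsto_atBot_mono hbound
    have hE : Tendsto (fun k : ℕ => exp ((2 * (k : ℝ) + 1) * π - π / 4))
        atTop atTop := by
      apply tendsto_exp_atTop.comp
      apply tendsto_atTop_add_const_right
      apply Tendsto.atTop_mul_const pi_pos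
      apply tendsto_atTop_add_const_right
      exact (tendsto_natCast_atTop_atTop).const_mul_atTop (by norm_num)
    have : Tendsto (fun k : ℕ =>
        c * (sqrt 2 / 2) * exp ((2 * (k : ℝ) + 1) * π - π / 4)) atTop atTop :=
      hE.const_mul_atTop (by positivity)
    have := (tendsto_neg_atBot_iff.mpr this)
    have := tendsto_atBot_add_const_left atTop (c * c) this
    convert this using 2 with k
    ring
  refine ⟨⟨a, ?_, htend⟩, ?_⟩
  · intro k _
    refine ⟨ha k, ?_, ?_, ?_⟩
    · rw [hha k]; rw [hc] at *; linarith
    · rw [hha k]; rw [hc] at *; linarith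
    · linarith [hcoslt k]
  · rintro ⟨α, _, hprop⟩
    have hge : ∀ k : ℕ,
        deriv (fun x => exp x * sin x) (a k) * (exp (a k) * sin (a k)) ≥
          -α c := by
      intro k
      have hcval : (3 / 4 * (exp (-(π / 4)) * sqrt 2 / 2)) = c := by
        rw [hc, hr]
      have := hprop (a k) (by rw [hha k]; linarith)
      rw [hha k, hcval] at this ⊢
      exact this
    have : ∀ᶠ k : ℕ in atTop,
        deriv (fun x => exp x * sin x) (a k) * (exp (a k) * sin (a k)) <
          -α c := htend.eventually_lt_atBot _
    obtain ⟨k, hk⟩ := this.exists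
    linarith [hge k]
end

section
/- Let h : ℝⁿ → ℝ be continuously differentiable and bounded above on C = {h ≥ 0}, say h(x) ≤ M on C, and let F : ℝⁿ → ℝⁿ be a continuously differentiable closed-loop vector field. Define h̄(x) = e^{−‖F(x)‖²} h(x). Then C = {x : h̄(x) ≥ 0}, {h̄ > 0} = {h > 0}, {h̄ = 0} = {h = 0}, and for all x ∈ C: ∇h̄(x)ᵀF(x) = e^{−‖F(x)‖²}[∇h(x)ᵀF(x) − h(x)·∇(‖F(x)‖²)ᵀF(x)]. Moreover, if ‖∇h(x)‖² ≤ Σ_{k=0}^{N} b_k‖F(x)‖^k and ‖∇(‖F(x)‖²)‖² ≤ Σ_{j=0}^{M₂} c_j‖F(x)‖^j on C with b_k, c_j ≥ 0, then the function x ↦ ∇h̄(x)ᵀF(x) is bounded below on C. -/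
/-!
Since `e^{-‖F‖²} > 0`, `h̄` and `h` have the same sign, and the product and chain rules give the
formula for `∇h̄ᵀF`. For the lower bound, Cauchy–Schwarz and `‖∇h‖ ≤ 1 + ‖∇h‖²` bound `|∇hᵀF|` by
`(1 + p(‖F‖)) ‖F‖` for a polynomial `p`, and `e^{-t²} tᵐ ≤ m!` (from `(t²)ᵐ / m! ≤ e^{t²}`) makes
`e^{-‖F‖²}` times this bounded; the term `h ∇(‖F‖²)ᵀF` is handled the same way using `0 ≤ h ≤ M`.
-/

open Real Finset

open scoped Nat

lemma Real.exp_neg_sq_mul_pow_le (m : ℕ) {t : ℝ} (ht : 0 ≤ t) :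
    exp (-t ^ 2) * t ^ m ≤ m ! := by
  have hexp : (t ^ 2) ^ m ≤ m ! * exp (t ^ 2) :=
    (div_le_iff₀' (by positivity)).mp (pow_div_factorial_le_exp _ (by positivity) m)
  have hpow : t ^ m ≤ m ! * exp (t ^ 2) := by
    rcases le_or_gt t 1 with ht1 | ht1
    · calc t ^ m ≤ 1 := pow_le_one₀ ht ht1
        _ ≤ m ! * exp (t ^ 2) :=
          one_le_mul_of_one_le_of_one_le (mod_cast m.factorial_pos)
            (one_le_exp (by positivity))
    · calc t ^ m ≤ (t ^ 2) ^ m := by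
            rw [← pow_mul]; exact pow_le_pow_right₀ ht1.le (by omega)
        _ ≤ _ := hexp
  rwa [exp_neg, inv_mul_le_iff₀ (exp_pos _), mul_comm]

lemma Real.exp_neg_sq_mul_one_add_sum_mul_le (a : ℕ → ℝ) (m : ℕ) {t : ℝ} (ht : 0 ≤ t) :
    exp (-t ^ 2) * ((1 + ∑ k ∈ range m, a k * t ^ k) * t) ≤
      1 + ∑ k ∈ range m, |a k| * (k + 1)! := by
  have hexpand : exp (-t ^ 2) * ((1 + ∑ k ∈ range m, a k * t ^ k) * t) =
      exp (-t ^ 2) * t ^ 1 + ∑ k ∈ range m, a k * (exp (-t ^ 2) * t ^ (k + 1)) := by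
    rw [add_mul, one_mul, mul_add, sum_mul, mul_sum, pow_one]
    exact congrArg _ (sum_congr rfl fun k _ => by ring)
  rw [hexpand]
  refine add_le_add (by simpa using exp_neg_sq_mul_pow_le 1 ht) (sum_le_sum fun k _ => ?_)
  calc a k * (exp (-t ^ 2) * t ^ (k + 1))
      ≤ |a k| * (exp (-t ^ 2) * t ^ (k + 1)) := by gcongr; exact le_abs_self _
    _ ≤ |a k| * (k + 1)! := by gcongr; exact exp_neg_sq_mul_pow_le (k + 1) ht

lemma abs_fderiv_apply_le_one_add_norm_gradient_sq_mul {E : Type*} [NormedAddCommGroup E]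
    [InnerProductSpace ℝ E] [CompleteSpace E] (f : E → ℝ) (x v : E) :
    |fderiv ℝ f x v| ≤ (1 + ‖gradient f x‖ ^ 2) * ‖v‖ := by
  have hinner : fderiv ℝ f x v = inner ℝ (gradient f x) v :=
    (InnerProductSpace.toDual_symm_apply).symm
  calc |fderiv ℝ f x v| ≤ ‖gradient f x‖ * ‖v‖ := hinner ▸ abs_real_inner_le_norm _ _
    _ ≤ (1 + ‖gradient f x‖ ^ 2) * ‖v‖ := by
        gcongr; nlinarith [sq_nonneg (‖gradient f x‖ - 1)]

lemma fderiv_exp_neg_mul_apply {E : Type*} [NormedAddCommGroup E] [NormedSpace ℝ E]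
    {f g : E → ℝ} {x : E} (hf : DifferentiableAt ℝ f x) (hg : DifferentiableAt ℝ g x)
    (v : E) :
    fderiv ℝ (fun y => exp (-g y) * f y) x v =
      exp (-g x) * (fderiv ℝ f x v - f x * fderiv ℝ g x v) := by
  have hderiv : HasFDerivAt (fun y => exp (-g y) * f y)
      (exp (-g x) • f x • -fderiv ℝ g x + exp (-g x) • fderiv ℝ f x) x :=
    (hg.hasFDerivAt.neg.exp.mul hf.hasFDerivAt).congr_fderiv (by module)
  rw [hderiv.fderiv]
  simp only [smul_neg, add_apply, neg_apply, smul_apply, smul_eq_mul]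
  ring

lemma abs_exp_neg_sq_mul_fderiv_apply_le {E : Type*} [NormedAddCommGroup E]
    [InnerProductSpace ℝ E] [CompleteSpace E] (f : E → ℝ) (x v : E) (a : ℕ → ℝ) (m : ℕ)
    (hgrad : ‖gradient f x‖ ^ 2 ≤ ∑ k ∈ range m, a k * ‖v‖ ^ k) :
    |exp (-‖v‖ ^ 2) * fderiv ℝ f x v| ≤ 1 + ∑ k ∈ range m, |a k| * (k + 1)! := by
  rw [abs_mul, abs_of_pos (exp_pos _)]
  calc exp (-‖v‖ ^ 2) * |fderiv ℝ f x v|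
      ≤ exp (-‖v‖ ^ 2) * ((1 + ‖gradient f x‖ ^ 2) * ‖v‖) := by
        gcongr; exact abs_fderiv_apply_le_one_add_norm_gradient_sq_mul f x v
    _ ≤ exp (-‖v‖ ^ 2) * ((1 + ∑ k ∈ range m, a k * ‖v‖ ^ k) * ‖v‖) := by gcongr
    _ ≤ 1 + ∑ k ∈ range m, |a k| * (k + 1)! :=
        exp_neg_sq_mul_one_add_sum_mul_le a m (norm_nonneg v)

theorem stmt12_general (n : ℕ) (h : EuclideanSpace ℝ (Fin n) → ℝ)
    (F : EuclideanSpace ℝ (Fin n) → EuclideanSpace ℝ (Fin n))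
    (hh : ContDiff ℝ 1 h) (hF : ContDiff ℝ 1 F)
    (M : ℝ) (hM : ∀ x, 0 ≤ h x → h x ≤ M)
    (N M₂ : ℕ) (b c : ℕ → ℝ)
    (hgradh : ∀ x, 0 ≤ h x →
      ‖gradient h x‖^2 ≤ ∑ k ∈ range (N + 1), b k * ‖F x‖^k)
    (hgradF : ∀ x, 0 ≤ h x →
      ‖gradient (fun y => ‖F y‖^2) x‖^2 ≤ ∑ j ∈ range (M₂ + 1), c j * ‖F x‖^j) :
    {x | 0 ≤ exp (-‖F x‖^2) * h x} = {x | 0 ≤ h x} ∧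
    {x | 0 < exp (-‖F x‖^2) * h x} = {x | 0 < h x} ∧
    {x | exp (-‖F x‖^2) * h x = 0} = {x | h x = 0} ∧
    (∀ x, 0 ≤ h x →
      fderiv ℝ (fun y => exp (-‖F y‖^2) * h y) x (F x) =
        exp (-‖F x‖^2) *
          (fderiv ℝ h x (F x) -
            h x * fderiv ℝ (fun y => ‖F y‖^2) x (F x))) ∧
    ∃ B : ℝ, ∀ x, 0 ≤ h x →
      B ≤ fderiv ℝ (fun y => exp (-‖F y‖^2) * h y) x (F x) := by
  have hformula : ∀ x, fderiv ℝ (fun y => exp (-‖F y‖^2) * h y) x (F x) =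
      exp (-‖F x‖^2) * (fderiv ℝ h x (F x) - h x * fderiv ℝ (fun y => ‖F y‖^2) x (F x)) :=
    fun x => fderiv_exp_neg_mul_apply (hh.differentiable one_ne_zero x)
      ((hF.norm_sq ℝ).differentiable one_ne_zero x) (F x)
  refine ⟨by ext x; simp [mul_nonneg_iff_of_pos_left (exp_pos _)],
    by ext x; simp [mul_pos_iff_of_pos_left (exp_pos _)],
    by ext x; simp [exp_ne_zero], fun x _ => hformula x, ?_⟩
  refine ⟨-(1 + ∑ k ∈ range (N + 1), |b k| * (k + 1)!) -
    M * (1 + ∑ j ∈ range (M₂ + 1), |c j| * (j + 1)!), fun x hx => ?_⟩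
  have hA := abs_le.mp (abs_exp_neg_sq_mul_fderiv_apply_le h x (F x) b _ (hgradh x hx))
  have hD := abs_exp_neg_sq_mul_fderiv_apply_le _ x (F x) c _ (hgradF x hx)
  have hhD : h x * (exp (-‖F x‖^2) * fderiv ℝ (fun y => ‖F y‖^2) x (F x)) ≤
      M * (1 + ∑ j ∈ range (M₂ + 1), |c j| * (j + 1)!) :=
    calc _ ≤ h x * |exp (-‖F x‖^2) * fderiv ℝ (fun y => ‖F y‖^2) x (F x)| := by
          gcongr; exact le_abs_self _
      _ ≤ _ := mul_le_mul (hM x hx) hD (abs_nonneg _) (hx.trans (hM x hx))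
  rw [hformula x]
  linarith

/-- Let `h` be `C¹` and bounded above by `M` on `C = {h ≥ 0}`, `F` a `C¹`
closed-loop vector field, and `h̄(x) = e^{−‖F(x)‖²} h(x)`.  Then `h̄` has the
same zero-superlevel, strict superlevel, and zero level sets as `h`, its
derivative along `F` satisfies the stated product formula, and under the
polynomial bounds on `‖∇h‖²` and `‖∇(‖F‖²)‖²` the function
`x ↦ ∇h̄(x)ᵀF(x)` is bounded below on `C`. -/
theorem stmt12 (n : ℕ) (h : EuclideanSpace ℝ (Fin n) → ℝ)
    (F : EuclideanSpace ℝ (Fin n) → EuclideanSpace ℝ (Fin n))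
    (hh : ContDiff ℝ 1 h) (hF : ContDiff ℝ 1 F)
    (M : ℝ) (hM : ∀ x, 0 ≤ h x → h x ≤ M)
    (N M₂ : ℕ) (b c : ℕ → ℝ) (hb : ∀ k, 0 ≤ b k) (hc : ∀ j, 0 ≤ c j)
    (hgradh : ∀ x, 0 ≤ h x →
      ‖gradient h x‖^2 ≤ ∑ k ∈ range (N + 1), b k * ‖F x‖^k)
    (hgradF : ∀ x, 0 ≤ h x →
      ‖gradient (fun y => ‖F y‖^2) x‖^2 ≤ ∑ j ∈ range (M₂ + 1), c j * ‖F x‖^j) :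
    {x | 0 ≤ exp (-‖F x‖^2) * h x} = {x | 0 ≤ h x} ∧
    {x | 0 < exp (-‖F x‖^2) * h x} = {x | 0 < h x} ∧
    {x | exp (-‖F x‖^2) * h x = 0} = {x | h x = 0} ∧
    (∀ x, 0 ≤ h x →
      fderiv ℝ (fun y => exp (-‖F y‖^2) * h y) x (F x) =
        exp (-‖F x‖^2) *
          (fderiv ℝ h x (F x) -
            h x * fderiv ℝ (fun y => ‖F y‖^2) x (F x))) ∧
    ∃ B : ℝ, ∀ x, 0 ≤ h x →
      B ≤ fderiv ℝ (fun y => exp (-‖F y‖^2) * h y) x (F x) :=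
  stmt12_general n h F hh hF M hM N M₂ b c hgradh hgradF
end

section
/- Consider the planar system ẋ = −xu, ẏ = −yu. The y-axis {x = 0} is invariant under any feedback, and for any locally Lipschitz feedback u : ℝ² → ℝ with u(0,5) ≠ 0, the solution starting at p = (0,5) satisfies: y(t) = 5 − 5u(p)t + O(t²) as t → 0⁺, and hence h(x(t), y(t)) = −25 u(p)² t² + O(t³) < 0 for all sufficiently small t > 0, where h(x,y) = 1 − (x+1)² − (y−5)² near p. Consequently any feedback keeping the set {h ≥ 0} forward invariant must satisfy u(0,5) = 0. -/
open Filter Asymptotics Topology Metric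

/-! The `x`-equation is linear in `x` with a continuous coefficient, so the integrating factor
`exp (∫ u)` shows `x ≡ 0`. The curve `t ↦ (x t, y t)` is `C¹`, hence locally Lipschitz, so the
derivative `-(y · u(x, y))` of `y` differs from its value at `0` by `O(t)`; the mean value theorem
applied to the first-order Taylor remainder of `y` then gives `y t = 5 - 5 u(p) t + O(t²)`.
On the `y`-axis `h = -(y - 5)²`, so `h = -25 u(p)² t² + O(t³)`, and the quadratic term, negative
when `u(p) ≠ 0`, dominates for small `t ≠ 0`. -/

theorem eq_zero_of_hasDerivAt_mul {f c : ℝ → ℝ} (hc : Continuous c)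
    (hf : ∀ t, HasDerivAt f (f t * c t) t) {t₀ : ℝ} (hf₀ : f t₀ = 0) (t : ℝ) : f t = 0 := by
  set C : ℝ → ℝ := fun t => ∫ s in t₀..t, c s
  have hC : ∀ t, HasDerivAt C (c t) t := fun t =>
    (hc.integral_hasStrictDerivAt t₀ t).hasDerivAt
  have hconst : ∀ t, HasDerivAt (fun t => f t * Real.exp (-C t)) 0 t := fun t =>
    ((hf t).mul (hC t).neg.exp).congr_deriv (by simp only [Pi.neg_apply]; ring)
  have h := is_const_of_deriv_eq_zero (fun t => (hconst t).differentiableAt)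
    (fun t => (hconst t).deriv) t t₀
  simpa [hf₀, Real.exp_ne_zero] using h

theorem locallyLipschitz_of_hasDerivAt {E : Type*} [NormedAddCommGroup E] [NormedSpace ℝ E]
    {f f' : ℝ → E} (hf : ∀ t, HasDerivAt f (f' t) t) (hf' : Continuous f') :
    LocallyLipschitz f := by
  have hderiv : deriv f = f' := funext fun t => (hf t).deriv
  refine ContDiff.locallyLipschitz (𝕂 := ℝ) <|
    contDiff_one_iff_deriv.2 ⟨fun t => (hf t).differentiableAt, ?_⟩
  rwa [hderiv]

theorem LocallyLipschitz.isBigO_sub {E F : Type*} [SeminormedAddCommGroup E]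
    [SeminormedAddCommGroup F] {f : E → F} (hf : LocallyLipschitz f) (x₀ : E) :
    (fun x => f x - f x₀) =O[𝓝 x₀] fun x => x - x₀ := by
  obtain ⟨K, s, hs, hK⟩ := hf x₀
  refine IsBigO.of_bound K (eventually_of_mem hs fun x hx => ?_)
  simpa [dist_eq_norm] using hK.dist_le_mul x hx x₀ (mem_of_mem_nhds hs)

theorem Asymptotics.IsBigO.mul_sub_mul {α 𝕜 : Type*} [NormedField 𝕜] {l : Filter α}
    {f g φ : α → 𝕜} {a b : 𝕜}
    (hf : (fun t => f t - a) =O[l] φ) (hg : (fun t => g t - b) =O[l] φ)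
    (hg_bdd : g =O[l] fun _ => (1 : 𝕜)) : (fun t => f t * g t - a * b) =O[l] φ := by
  have hfg : (fun t => (f t - a) * g t) =O[l] φ := by simpa using hf.mul hg_bdd
  exact (hfg.add (hg.const_mul_left a)).congr_left fun t => by ring

theorem isBigO_sub_sub_mul_sq_of_hasDerivAt {f f' : ℝ → ℝ} {t₀ : ℝ}
    (hf : ∀ᶠ t in 𝓝 t₀, HasDerivAt f (f' t) t)
    (hf' : (fun t => f' t - f' t₀) =O[𝓝 t₀] fun t => t - t₀) :
    (fun t => f t - f t₀ - f' t₀ * (t - t₀)) =O[𝓝 t₀] fun t => (t - t₀) ^ 2 := by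
  obtain ⟨C, hC₀, hC⟩ := hf'.exists_nonneg
  obtain ⟨ε, hε, hball⟩ := Metric.eventually_nhds_iff_ball.1 (hf.and hC.bound)
  refine IsBigO.of_bound C (eventually_of_mem (ball_mem_nhds t₀ hε) fun t ht => ?_)
  have hsub : closedBall t₀ (dist t t₀) ⊆ ball t₀ ε := closedBall_subset_ball ht
  have hmvt := (convex_closedBall t₀ (dist t t₀)).norm_image_sub_le_of_norm_hasDerivWithin_le
    (f := fun s => f s - f' t₀ * (s - t₀)) (f' := fun s => f' s - f' t₀) (C := C * dist t t₀)
    (fun s hs => (((hball s (hsub hs)).1.sub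
      (((hasDerivAt_id s).sub_const t₀).const_mul (f' t₀))).congr_deriv
        (by simp)).hasDerivWithinAt)
    (fun s hs => (hball s (hsub hs)).2.trans <| by
      gcongr
      simpa [dist_eq_norm] using hs)
    (mem_closedBall_self dist_nonneg) (mem_closedBall.2 le_rfl)
  simp only [sub_self, mul_zero, sub_zero, dist_eq_norm] at hmvt
  calc ‖f t - f t₀ - f' t₀ * (t - t₀)‖ = ‖f t - f' t₀ * (t - t₀) - f t₀‖ := by
        rw [sub_right_comm]
    _ ≤ C * ‖t - t₀‖ * ‖t - t₀‖ := hmvt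
    _ = C * ‖(t - t₀) ^ 2‖ := by rw [norm_pow]; ring

theorem isBigO_sq_sub_mul_sq {g : ℝ → ℝ} (b : ℝ)
    (hg : (fun t => g t - b * t) =O[𝓝 0] fun t => t ^ 2) :
    (fun t => g t ^ 2 - (b * t) ^ 2) =O[𝓝 0] fun t => t ^ 3 := by
  have hsq : (fun t : ℝ => t ^ 2) =O[𝓝 0] fun t => t := by
    simpa using (isLittleO_pow_pow (𝕜 := ℝ) (m := 1) (n := 2) (by norm_num)).isBigO
  have hsum : (fun t => g t - b * t + 2 * b * t) =O[𝓝 0] fun t => t :=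
    (hg.trans hsq).add ((isBigO_refl _ _).const_mul_left (2 * b))
  exact (hg.mul hsum).congr (fun t => by ring) (fun t => by ring)

theorem eventually_neg_of_isBigO_sub_mul_sq {f : ℝ → ℝ} {a : ℝ} (ha : a < 0)
    (hf : (fun t => f t - a * t ^ 2) =O[𝓝[≠] 0] fun t => t ^ 3) :
    ∀ᶠ t in 𝓝[≠] 0, f t < 0 := by
  have hcube : (fun t : ℝ => t ^ 3) =o[𝓝[≠] 0] fun t => t ^ 2 :=
    (isLittleO_pow_pow (by norm_num)).mono nhdsWithin_le_nhds
  filter_upwards [(hf.trans_isLittleO hcube).bound (by linarith : 0 < -a / 2),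
    self_mem_nhdsWithin] with t hbound ht
  rw [Real.norm_eq_abs, norm_pow, Real.norm_eq_abs, sq_abs] at hbound
  nlinarith [abs_le.1 hbound, sq_pos_of_ne_zero (show t ≠ 0 from ht)]

/-- For the planar system `ẋ = −xu, ẏ = −yu` with a locally Lipschitz feedback
`u` such that `u(0,5) ≠ 0`: for the solution starting at `p = (0,5)`, the
`y`-axis is invariant (`x(t) ≡ 0`), `y(t) = 5 − 5u(p)t + O(t²)` as `t → 0⁺`,
`h(x(t),y(t)) = −25u(p)²t² + O(t³)` for `h(x,y) = 1 − (x+1)² − (y−5)²`, and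
`h(x(t),y(t)) < 0` for all sufficiently small `t > 0`; so any feedback keeping
`{h ≥ 0}` forward invariant must satisfy `u(0,5) = 0`. -/
theorem stmt16 (u : ℝ × ℝ → ℝ) (hu : LocallyLipschitz u)
    (hup : u (0, 5) ≠ 0) (x y : ℝ → ℝ)
    (hx0 : x 0 = 0) (hy0 : y 0 = 5)
    (hx : ∀ t, HasDerivAt x (-(x t * u (x t, y t))) t)
    (hy : ∀ t, HasDerivAt y (-(y t * u (x t, y t))) t) :
    (∀ t, 0 ≤ t → x t = 0) ∧
    (fun t => y t - (5 - 5 * u (0, 5) * t)) =O[nhdsWithin 0 (Set.Ioi 0)]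
      (fun t => t^2) ∧
    (fun t => (1 - (x t + 1)^2 - (y t - 5)^2) - (-25 * u (0, 5)^2 * t^2))
      =O[nhdsWithin 0 (Set.Ioi 0)] (fun t => t^3) ∧
    ∀ᶠ t in nhdsWithin 0 (Set.Ioi 0),
      1 - (x t + 1)^2 - (y t - 5)^2 < 0 := by
  set c : ℝ → ℝ := fun t => u (x t, y t)
  have hγ : ∀ t, HasDerivAt (fun t => (x t, y t)) (-(x t * c t), -(y t * c t)) t :=
    fun t => (hx t).prodMk (hy t)
  have hx_cont : Continuous x := continuous_iff_continuousAt.2 fun t => (hx t).continuousAt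
  have hy_cont : Continuous y := continuous_iff_continuousAt.2 fun t => (hy t).continuousAt
  have hc : Continuous c := hu.continuous.comp (hx_cont.prodMk hy_cont)
  have hx_zero : ∀ t, x t = 0 :=
    eq_zero_of_hasDerivAt_mul hc.neg (fun t => (hx t).congr_deriv (by simp [c])) hx0
  have hc_sub : (fun t => c t - c 0) =O[𝓝 0] fun t => t - 0 :=
    (hu.comp (locallyLipschitz_of_hasDerivAt hγ (by fun_prop))).isBigO_sub 0
  have hy'_sub : (fun t => -(y t * c t) - -(y 0 * c 0)) =O[𝓝 0] fun t => t - 0 := by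
    refine ((hy 0).differentiableAt.isBigO_sub.mul_sub_mul hc_sub ?_).neg_left.congr_left
      fun t => by ring
    exact (hc.tendsto 0).isBigO_one ℝ
  have hy_taylor : (fun t => y t - (5 - 5 * u (0, 5) * t)) =O[𝓝 0] fun t => t ^ 2 := by
    have := isBigO_sub_sub_mul_sq_of_hasDerivAt (.of_forall hy) hy'_sub
    simp only [sub_zero, hx0, hy0] at this
    exact this.congr_left fun t => by ring
  have hh : (fun t => (1 - (x t + 1)^2 - (y t - 5)^2) - (-25 * u (0, 5)^2 * t^2))
      =O[𝓝 0] fun t => t ^ 3 := by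
    have := isBigO_sq_sub_mul_sq (g := fun t => y t - 5) (-5 * u (0, 5))
      (hy_taylor.congr_left fun t => by ring)
    exact this.neg_left.congr_left fun t => by rw [hx_zero]; ring
  have hquad : -25 * u (0, 5) ^ 2 < 0 :=
    mul_neg_of_neg_of_pos (by norm_num) (sq_pos_of_ne_zero hup)
  refine ⟨fun t _ => hx_zero t, hy_taylor.mono nhdsWithin_le_nhds, hh.mono nhdsWithin_le_nhds, ?_⟩
  exact (eventually_neg_of_isBigO_sub_mul_sq hquad (hh.mono nhdsWithin_le_nhds)).filter_mono
    (nhdsWithin_mono _ fun t ht => ne_of_gt ht)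
end

section
/- Let a, g be locally Lipschitz (control-affine dynamics ẋ = a(x) + g(x)u, u ∈ ℝᵐ) and let V, h be continuously differentiable. Fix x with L_g h(x) ≠ 0 and suppose L_g V(x) = κ L_g h(x) for some κ > 0 and L_a V(x) + W(x) < (L_gV(x)ᵀL_gh(x)/‖L_gh(x)‖²)·(L_a h(x) + α̂), where W(x) ∈ ℝ and α̂ ∈ ℝ with α̂ ≥ 0. Then there exists u ∈ ℝᵐ simultaneously satisfying L_aV(x) + L_gV(x)ᵀu + W(x) ≤ 0 and L_ah(x) + L_gh(x)ᵀu + α̂ ≥ 0. -/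
section

variable {E : Type*} [NormedAddCommGroup E] [InnerProductSpace ℝ E]

theorem exists_real_inner_eq {v : E} (hv : v ≠ 0) (c : ℝ) : ∃ u : E, inner ℝ v u = c := by
  refine ⟨(c / ‖v‖ ^ 2) • v, ?_⟩
  have hv' : ‖v‖ ^ 2 ≠ 0 := by positivity
  rw [real_inner_smul_right, real_inner_self_eq_norm_sq, div_mul_cancel₀ c hv']

theorem real_inner_smul_self_div_norm_sq {v : E} (hv : v ≠ 0) (κ : ℝ) :
    inner ℝ (κ • v) v / ‖v‖ ^ 2 = κ := by
  have hv' : ‖v‖ ^ 2 ≠ 0 := by positivity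
  rw [real_inner_smul_left, real_inner_self_eq_norm_sq, mul_div_cancel_right₀ κ hv']

end

theorem stmt18_general (m : ℕ) (LgV Lgh : EuclideanSpace ℝ (Fin m))
    (LaV Lah W αhat κ : ℝ)
    (hLgh : Lgh ≠ 0) (hdep : LgV = κ • Lgh)
    (hineq : LaV + W <
      ((inner ℝ LgV Lgh : ℝ) / ‖Lgh‖^2) * (Lah + αhat)) :
    ∃ u : EuclideanSpace ℝ (Fin m),
      LaV + (inner ℝ LgV u : ℝ) + W ≤ 0 ∧
      Lah + (inner ℝ Lgh u : ℝ) + αhat ≥ 0 := by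
  -- Make the CBF constraint tight; the CLF constraint then reads `LaV + W ≤ κ (Lah + αhat)`.
  obtain ⟨u, hu⟩ := exists_real_inner_eq hLgh (-(Lah + αhat))
  rw [hdep, real_inner_smul_self_div_norm_sq hLgh] at hineq
  refine ⟨u, ?_, ?_⟩
  · rw [hdep, real_inner_smul_left, hu]
    linarith
  · rw [hu]
    linarith

/-- Compatibility in the linearly dependent case: if `L_g h(x) ≠ 0`,
`L_g V(x) = κ L_g h(x)` with `κ > 0`, `α̂ ≥ 0`, and
`L_aV + W < (⟨L_gV, L_gh⟩/‖L_gh‖²)(L_ah + α̂)`, then some control `u`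
simultaneously satisfies the CLF inequality `L_aV + ⟨L_gV, u⟩ + W ≤ 0` and the
CBF inequality `L_ah + ⟨L_gh, u⟩ + α̂ ≥ 0`. -/
theorem stmt18 (m : ℕ) (LgV Lgh : EuclideanSpace ℝ (Fin m))
    (LaV Lah W αhat κ : ℝ)
    (hLgh : Lgh ≠ 0) (hκ : 0 < κ) (hdep : LgV = κ • Lgh) (hα : 0 ≤ αhat)
    (hineq : LaV + W <
      ((inner ℝ LgV Lgh : ℝ) / ‖Lgh‖^2) * (Lah + αhat)) :
    ∃ u : EuclideanSpace ℝ (Fin m),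
      LaV + (inner ℝ LgV u : ℝ) + W ≤ 0 ∧
      Lah + (inner ℝ Lgh u : ℝ) + αhat ≥ 0 :=
  stmt18_general m LgV Lgh LaV Lah W αhat κ hLgh hdep hineq
end
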